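/- Suppose C = D_0ᵀ·(D_1·D_2⋯D_d)·D_{d+1} has ℓ-block-support concentration, i.e., every coefficient C_e lies in the F-span of {C_f : bs(f) ≤ ℓ - 1}, and suppose for every i ∈ {0,1,...,d+1} the polynomial D_i has ℓ'-support concentration, i.e., every entrywise coefficient D_{i,g} lies in the F-span of {D_{i,g'} : g' an exponent vector over x_i of support size at most ℓ' - 1}. Then for every exponent vector e, the coefficient C_e lies in the F-span of {C_f : f an exponent vector of support size at most (ℓ-1)·(ℓ'-1)}; in particular C has ((ℓ-1)(ℓ'-1)+1)-support concentration. -/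

import Mathlib

open Finset

/-- The block-support `bS(e)` of an exponent vector `e`: the set of blocks `i` (under the
block assignment `π` of variables to blocks) on which `e` is not identically zero. -/
def blockSupport {n d : ℕ} (π : Fin n → Fin d) (e : Fin n → ℕ) : Finset (Fin d) :=
  Finset.univ.filter fun i => ∃ j, π j = i ∧ e j ≠ 0

/-- The support size of an exponent vector: the number of variables occurring in it with a
positive exponent. -/
def suppSize {n : ℕ} (e : Fin n → ℕ) : ℕ :=
  (Finset.univ.filter fun j => e j ≠ 0).card

/-- The restriction of the exponent vector `e` to block `i` (as a function). -/
def blockRestrict {n d : ℕ} (π : Fin n → Fin d) (i : Fin d) (e : Fin n → ℕ) :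
    Fin n → ℕ :=
  fun j => if π j = i then e j else 0

/-- The monomial `x_i^{e_i}`: the restriction of the exponent vector `e` to block `i`. -/
noncomputable def blockMonomial {n d : ℕ} (π : Fin n → Fin d) (i : Fin d)
    (e : Fin n → ℕ) : Fin n →₀ ℕ :=
  Finsupp.equivFunOnFinite.symm (blockRestrict π i e)

/-- The matrix `∏_{i=1}^d D_{i,e_i}`, where the middle factors occupy the blocks
`1, …, d` of `Fin (d+2)`. -/
noncomputable def midCoeff {F : Type*} [Field F] {w n d : ℕ} (π : Fin n → Fin (d + 2))
    (Dmid : Fin d → Matrix (Fin w) (Fin w) (MvPolynomial (Fin n) F)) (e : Fin n → ℕ) :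
    Matrix (Fin w) (Fin w) F :=
  ((List.finRange d).map fun i =>
    (Dmid i).map (MvPolynomial.coeff (blockMonomial π i.succ.castSucc e))).prod

/-- The coefficient `C_e = D_{0,e_0}ᵀ·(∏_{i=1}^d D_{i,e_i})·D_{d+1,e_{d+1}}` of `x^e` in
`C = D_0ᵀ·(D_1⋯D_d)·D_{d+1}`, the end vectors occupying blocks `0` and `d+1`. -/
noncomputable def fullCoeff {F : Type*} [Field F] {w n d : ℕ} (π : Fin n → Fin (d + 2))
    (D0 Dlast : Fin w → MvPolynomial (Fin n) F)
    (Dmid : Fin d → Matrix (Fin w) (Fin w) (MvPolynomial (Fin n) F)) (e : Fin n → ℕ) :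
    F :=
  dotProduct (fun a => MvPolynomial.coeff (blockMonomial π 0 e) (D0 a))
    ((midCoeff π Dmid e).mulVec
      fun b => MvPolynomial.coeff (blockMonomial π (Fin.last (d + 1)) e) (Dlast b))

/-!
The coefficient `C_f` is multilinear in the block coefficients `D_{0,f_0}`, `D_{i,f_i}`,
`D_{d+1,f_{d+1}}`, each of which only sees the restriction of `f` to its block. Given `f` with
`bs(f) ≤ ℓ - 1`, expand the block coefficient of every block of `bS(f)` by `ℓ'`-support
concentration and keep the other blocks at zero; multilinearity then writes `C_f` as a
combination of coefficients `C_g` with `g` glued blockwise, so that `g` has support size at most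
`|bS(f)| (ℓ' - 1) ≤ (ℓ - 1)(ℓ' - 1)`. Together with `ℓ`-block-support concentration of `C` this
gives every `C_e`.
-/

open Submodule Set Matrix

theorem Submodule.apply_mem_span_image2_of_mem_span {R M N P : Type*} [CommSemiring R]
    [AddCommMonoid M] [AddCommMonoid N] [AddCommMonoid P] [Module R M] [Module R N]
    [Module R P] (f : M →ₗ[R] N →ₗ[R] P) {x : M} {y : N} {s : Set M} {t : Set N}
    (hx : x ∈ span R s) (hy : y ∈ span R t) :
    f x y ∈ span R (image2 (fun m n => f m n) s t) :=
  map₂_span_span R f s t ▸ apply_mem_map₂ f hx hy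

theorem Matrix.dotProduct_mulVec_mem_span {R m n : Type*} [CommSemiring R] [Fintype m]
    [Fintype n] {u : m → R} {A : Matrix m n R} {v : n → R} {U : Set (m → R)}
    {𝒜 : Set (Matrix m n R)} {V : Set (n → R)}
    (hu : u ∈ span R U) (hA : A ∈ span R 𝒜) (hv : v ∈ span R V) :
    u ⬝ᵥ (A *ᵥ v) ∈ span R (image2 (· ⬝ᵥ ·) U (image2 (· *ᵥ ·) 𝒜 V)) :=
  apply_mem_span_image2_of_mem_span (dotProductBilin R R) hu
    (apply_mem_span_image2_of_mem_span (Matrix.mulVecBilin R R) hA hv)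

theorem List.prod_ofFn_mem_span {R A : Type*} [CommSemiring R] [Semiring A] [Algebra R A]
    {d : ℕ} {a : Fin d → A} {s : Fin d → Set A} (ha : ∀ i, a i ∈ Submodule.span R (s i)) :
    (List.ofFn a).prod ∈ Submodule.span R ((fun b => (List.ofFn b).prod) '' univ.pi s) := by
  induction d with
  | zero => exact Submodule.subset_span ⟨a, by simp, rfl⟩
  | succ d ih =>
    have hmul := Submodule.mul_mem_mul (ha 0) (ih fun i => ha i.succ)
    rw [Submodule.span_mul_span] at hmul
    rw [List.ofFn_succ, List.prod_cons]
    refine Submodule.span_mono ?_ hmul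
    rintro _ ⟨c, hc, _, ⟨b, hb, rfl⟩, rfl⟩
    refine ⟨Fin.cons c b, ?_, by simp [List.ofFn_succ]⟩
    simp only [mem_univ_pi, Fin.forall_fin_succ, Fin.cons_zero, Fin.cons_succ] at hb ⊢
    exact ⟨hc, hb⟩

def glueBlocks {n d : ℕ} (π : Fin n → Fin d) (G : Fin d → Fin n → ℕ) : Fin n → ℕ :=
  fun j => G (π j) j

section Blocks

variable {n d : ℕ} (π : Fin n → Fin d)

theorem blockRestrict_glueBlocks (G : Fin d → Fin n → ℕ) (k : Fin d) :
    blockRestrict π k (glueBlocks π G) = blockRestrict π k (G k) := by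
  funext j
  by_cases h : π j = k <;> simp [blockRestrict, glueBlocks, h]

theorem blockMonomial_glueBlocks (G : Fin d → Fin n → ℕ) (k : Fin d) :
    blockMonomial π k (glueBlocks π G) = blockMonomial π k (G k) := by
  rw [blockMonomial, blockRestrict_glueBlocks, blockMonomial]

theorem suppSize_eq_sum_blockRestrict (g : Fin n → ℕ) :
    suppSize g = ∑ k, suppSize (blockRestrict π k g) := by
  classical
  rw [suppSize, card_eq_sum_card_fiberwise fun j _ => mem_univ (π j)]
  refine sum_congr rfl fun k _ => congrArg card ?_
  ext j
  by_cases h : π j = k <;> simp [blockRestrict, h]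

theorem suppSize_blockRestrict_eq_zero {g : Fin n → ℕ} {k : Fin d}
    (hk : k ∉ blockSupport π g) : suppSize (blockRestrict π k g) = 0 := by
  simp_all [suppSize, blockRestrict, blockSupport]

theorem suppSize_le_card_mul {g : Fin n → ℕ} {S : Finset (Fin d)} {L : ℕ}
    (hg : ∀ k, suppSize (blockRestrict π k g) ≤ if k ∈ S then L else 0) :
    suppSize g ≤ #S * L := by
  calc suppSize g = ∑ k, suppSize (blockRestrict π k g) := suppSize_eq_sum_blockRestrict π g
    _ ≤ ∑ k, if k ∈ S then L else 0 := sum_le_sum fun k _ => hg k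
    _ = #S * L := by simp [sum_ite_mem]

theorem mem_span_suppSize_blockRestrict_le_ite {R V : Type*} [Semiring R] [AddCommMonoid V]
    [Module R V] (c : (Fin n → ℕ) → V) (k : Fin d) (L : ℕ) {f : Fin n → ℕ}
    (hf : c f ∈ span R {x | ∃ g, suppSize (blockRestrict π k g) ≤ L ∧ x = c g}) :
    c f ∈ span R {x | ∃ g, suppSize (blockRestrict π k g) ≤
      (if k ∈ blockSupport π f then L else 0) ∧ x = c g} := by
  split_ifs with hk
  · exact hf
  · exact subset_span ⟨f, (suppSize_blockRestrict_eq_zero π hk).le, rfl⟩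

end Blocks

section Composition

variable {F : Type*} [Field F] {w n d : ℕ} (π : Fin n → Fin (d + 2))
  (D0 Dlast : Fin w → MvPolynomial (Fin n) F)
  (Dmid : Fin d → Matrix (Fin w) (Fin w) (MvPolynomial (Fin n) F))

theorem fullCoeff_glueBlocks (G : Fin (d + 2) → Fin n → ℕ) :
    fullCoeff π D0 Dlast Dmid (glueBlocks π G) =
      (fun a => MvPolynomial.coeff (blockMonomial π 0 (G 0)) (D0 a)) ⬝ᵥ
        ((List.ofFn fun i => (Dmid i).map
            (MvPolynomial.coeff (blockMonomial π i.succ.castSucc (G i.succ.castSucc)))).prod *ᵥ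
          fun b => MvPolynomial.coeff
            (blockMonomial π (Fin.last (d + 1)) (G (Fin.last (d + 1)))) (Dlast b)) := by
  simp only [fullCoeff, midCoeff, blockMonomial_glueBlocks, List.ofFn_eq_map]

theorem fullCoeff_mem_span_of_blockwise (P : Fin (d + 2) → (Fin n → ℕ) → Prop)
    (f : Fin n → ℕ)
    (h0 : (fun a => MvPolynomial.coeff (blockMonomial π 0 f) (D0 a)) ∈ span F
      {v | ∃ g, P 0 (blockRestrict π 0 g) ∧
        v = fun a => MvPolynomial.coeff (blockMonomial π 0 g) (D0 a)})
    (hlast : (fun b => MvPolynomial.coeff (blockMonomial π (Fin.last (d + 1)) f) (Dlast b)) ∈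
      span F {v | ∃ g, P (Fin.last (d + 1)) (blockRestrict π (Fin.last (d + 1)) g) ∧
        v = fun b => MvPolynomial.coeff (blockMonomial π (Fin.last (d + 1)) g) (Dlast b)})
    (hmid : ∀ i : Fin d,
      (Dmid i).map (MvPolynomial.coeff (blockMonomial π i.succ.castSucc f)) ∈ span F
        {M | ∃ g, P i.succ.castSucc (blockRestrict π i.succ.castSucc g) ∧
          M = (Dmid i).map (MvPolynomial.coeff (blockMonomial π i.succ.castSucc g))}) :
    fullCoeff π D0 Dlast Dmid f ∈ span F
      {c | ∃ g, (∀ k, P k (blockRestrict π k g)) ∧ c = fullCoeff π D0 Dlast Dmid g} := by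
  have hprod := dotProduct_mulVec_mem_span h0 (List.prod_ofFn_mem_span hmid) hlast
  rw [fullCoeff, midCoeff, ← List.ofFn_eq_map]
  refine span_le.mpr ?_ hprod
  rintro _ ⟨_, ⟨g0, hg0, rfl⟩, _, ⟨_, ⟨Ms, hMs, rfl⟩, _, ⟨gl, hgl, rfl⟩, rfl⟩, rfl⟩
  choose gm hgm hMs using fun i => hMs i (mem_univ i)
  let G : Fin (d + 2) → Fin n → ℕ := Fin.cons g0 (Fin.snoc gm gl)
  have hG0 : G 0 = g0 := Fin.cons_zero _ _
  have hGlast : G (Fin.last (d + 1)) = gl := by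
    rw [← Fin.succ_last]; exact (Fin.cons_succ _ _ _).trans (Fin.snoc_last _ _)
  have hGmid : ∀ i : Fin d, G i.succ.castSucc = gm i := fun i => by
    rw [← Fin.succ_castSucc]; exact (Fin.cons_succ _ _ _).trans (Fin.snoc_castSucc _ _ _)
  refine subset_span ⟨glueBlocks π G, fun k => ?_, ?_⟩
  · rw [blockRestrict_glueBlocks]
    induction k using Fin.cases with
    | zero => rwa [hG0]
    | succ k =>
      induction k using Fin.lastCases with
      | last => rwa [Fin.succ_last, hGlast]
      | cast i => rw [Fin.succ_castSucc, hGmid]; exact hgm i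
  · simp only [fullCoeff_glueBlocks, hG0, hGlast, hGmid, ← hMs]

end Composition

theorem concentration_composition_general (F : Type*) [Field F] (w n d ℓ ℓ' : ℕ)
    (π : Fin n → Fin (d + 2))
    (D0 Dlast : Fin w → MvPolynomial (Fin n) F)
    (Dmid : Fin d → Matrix (Fin w) (Fin w) (MvPolynomial (Fin n) F))
    -- `ℓ`-block-support concentration of `C`
    (hblock : ∀ e : Fin n → ℕ, fullCoeff π D0 Dlast Dmid e ∈ Submodule.span F
      {c : F | ∃ f, (blockSupport π f).card ≤ ℓ - 1 ∧ c = fullCoeff π D0 Dlast Dmid f})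
    -- `ℓ'`-support concentration of `D_0`
    (hconc0 : ∀ g : Fin n → ℕ,
      (fun a => MvPolynomial.coeff (blockMonomial π 0 g) (D0 a)) ∈ Submodule.span F
        {v : Fin w → F | ∃ g', suppSize (blockRestrict π 0 g') ≤ ℓ' - 1 ∧
          v = fun a => MvPolynomial.coeff (blockMonomial π 0 g') (D0 a)})
    -- `ℓ'`-support concentration of `D_{d+1}`
    (hconcLast : ∀ g : Fin n → ℕ,
      (fun b => MvPolynomial.coeff (blockMonomial π (Fin.last (d + 1)) g) (Dlast b)) ∈
        Submodule.span F
          {v : Fin w → F | ∃ g',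
            suppSize (blockRestrict π (Fin.last (d + 1)) g') ≤ ℓ' - 1 ∧
            v = fun b => MvPolynomial.coeff (blockMonomial π (Fin.last (d + 1)) g')
              (Dlast b)})
    -- `ℓ'`-support concentration of each middle factor `D_i`
    (hconcMid : ∀ (i : Fin d) (g : Fin n → ℕ),
      (Dmid i).map (MvPolynomial.coeff (blockMonomial π i.succ.castSucc g)) ∈
        Submodule.span F
          {M : Matrix (Fin w) (Fin w) F | ∃ g',
            suppSize (blockRestrict π i.succ.castSucc g') ≤ ℓ' - 1 ∧
            M = (Dmid i).map (MvPolynomial.coeff (blockMonomial π i.succ.castSucc g'))}) :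
    ∀ e : Fin n → ℕ, fullCoeff π D0 Dlast Dmid e ∈ Submodule.span F
      {c : F | ∃ f, suppSize f ≤ (ℓ - 1) * (ℓ' - 1) ∧
        c = fullCoeff π D0 Dlast Dmid f} := by
  intro e
  refine span_le.mpr ?_ (hblock e)
  rintro _ ⟨f, hf, rfl⟩
  have hf_span := fullCoeff_mem_span_of_blockwise π D0 Dlast Dmid
    (fun k h => suppSize h ≤ if k ∈ blockSupport π f then ℓ' - 1 else 0) f
    (mem_span_suppSize_blockRestrict_le_ite π _ 0 _ (hconc0 f))
    (mem_span_suppSize_blockRestrict_le_ite π _ _ _ (hconcLast f))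
    (fun i => mem_span_suppSize_blockRestrict_le_ite π _ _ _ (hconcMid i f))
  refine span_mono ?_ hf_span
  rintro _ ⟨g, hg, rfl⟩
  exact ⟨g, (suppSize_le_card_mul π hg).trans (Nat.mul_le_mul_right _ hf), rfl⟩

/-- Composition: if `C = D_0ᵀ·(D_1⋯D_d)·D_{d+1}` has `ℓ`-block-support concentration and
each factor `D_i` has `ℓ'`-support concentration, then `C` has
`((ℓ-1)(ℓ'-1)+1)`-support concentration. -/
theorem concentration_composition (F : Type*) [Field F] (w n d ℓ ℓ' : ℕ)
    (hw : 1 ≤ w) (hd : 1 ≤ d) (hℓ : 1 ≤ ℓ) (hℓ' : 1 ≤ ℓ')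
    (π : Fin n → Fin (d + 2))
    (D0 Dlast : Fin w → MvPolynomial (Fin n) F)
    (Dmid : Fin d → Matrix (Fin w) (Fin w) (MvPolynomial (Fin n) F))
    -- variable-disjointness: each factor only involves the variables of its own block
    (hvars0 : ∀ a, ∀ j ∈ (D0 a).vars, π j = 0)
    (hvarsLast : ∀ b, ∀ j ∈ (Dlast b).vars, π j = Fin.last (d + 1))
    (hvarsMid : ∀ i a b, ∀ j ∈ (Dmid i a b).vars, π j = i.succ.castSucc)
    -- `ℓ`-block-support concentration of `C`
    (hblock : ∀ e : Fin n → ℕ, fullCoeff π D0 Dlast Dmid e ∈ Submodule.span F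
      {c : F | ∃ f, (blockSupport π f).card ≤ ℓ - 1 ∧ c = fullCoeff π D0 Dlast Dmid f})
    -- `ℓ'`-support concentration of `D_0`
    (hconc0 : ∀ g : Fin n → ℕ,
      (fun a => MvPolynomial.coeff (blockMonomial π 0 g) (D0 a)) ∈ Submodule.span F
        {v : Fin w → F | ∃ g', suppSize (blockRestrict π 0 g') ≤ ℓ' - 1 ∧
          v = fun a => MvPolynomial.coeff (blockMonomial π 0 g') (D0 a)})
    -- `ℓ'`-support concentration of `D_{d+1}`
    (hconcLast : ∀ g : Fin n → ℕ,
      (fun b => MvPolynomial.coeff (blockMonomial π (Fin.last (d + 1)) g) (Dlast b)) ∈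
        Submodule.span F
          {v : Fin w → F | ∃ g',
            suppSize (blockRestrict π (Fin.last (d + 1)) g') ≤ ℓ' - 1 ∧
            v = fun b => MvPolynomial.coeff (blockMonomial π (Fin.last (d + 1)) g')
              (Dlast b)})
    -- `ℓ'`-support concentration of each middle factor `D_i`
    (hconcMid : ∀ (i : Fin d) (g : Fin n → ℕ),
      (Dmid i).map (MvPolynomial.coeff (blockMonomial π i.succ.castSucc g)) ∈
        Submodule.span F
          {M : Matrix (Fin w) (Fin w) F | ∃ g',
            suppSize (blockRestrict π i.succ.castSucc g') ≤ ℓ' - 1 ∧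
            M = (Dmid i).map (MvPolynomial.coeff (blockMonomial π i.succ.castSucc g'))}) :
    ∀ e : Fin n → ℕ, fullCoeff π D0 Dlast Dmid e ∈ Submodule.span F
      {c : F | ∃ f, suppSize f ≤ (ℓ - 1) * (ℓ' - 1) ∧
        c = fullCoeff π D0 Dlast Dmid f} :=
  concentration_composition_general F w n d ℓ ℓ' π D0 Dlast Dmid hblock hconc0 hconcLast hconcMid
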